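/- Define paracomplex-valued functions on ℝ² by ψ₁(u,v) = (e^v/2)(sinh u + τ cosh u), ψ₂(u,v) = 0, ψ₃(u,v) = (e^v/2)(cosh u + τ sinh u). Then: (1) they satisfy the Lorentzian Heisenberg Weierstrass system ∂ψ₁/∂z̄ − Re(conj(ψ₃)ψ₂) = 0 and ∂ψ₂/∂z̄ + Re(conj(ψ₃)ψ₁) = 0 on all of ℝ²; (2) ψ₁² + ψ₂² − ψ₃² = 0; (3) the quantity ψ₁conj(ψ₁) + ψ₂conj(ψ₂) − ψ₃conj(ψ₃) equals −e^{2v}/2 < 0 (identifying a real paracomplex number (x,0) with x). -/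

import Mathlib

/-!
Write z = ψ₁(u,v). Then ψ₃ = τ·ψ₁ is the coordinate swap of z and ψ₂ = 0, so everything
reduces to two facts about z. First, z = (e^v/2)(sinh u, cosh u) is paraholomorphic:
∂_u z = τ·∂_v z, i.e. a_u = b_v and b_u = a_v, which is exactly ∂z/∂z̄ = 0. Second, since τ² = 1
and conj(τ) = −τ, one has (τz)² = z², (τz)·conj(τz) = −z·conj(z), and Re(conj(τz)·z) = 0; with
z·conj(z) = (e^{2v}/4)(sinh² u − cosh² u) = −e^{2v}/4 this gives all three claims.
-/

/-- Paracomplex multiplication on 𝕃 = ℝ × ℝ. -/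
def Lmul (z w : ℝ × ℝ) : ℝ × ℝ := (z.1 * w.1 + z.2 * w.2, z.1 * w.2 + z.2 * w.1)

/-- Paracomplex conjugation: a + τb ↦ a − τb. -/
def Lconj (z : ℝ × ℝ) : ℝ × ℝ := (z.1, -z.2)

/-- The real part of a paracomplex number, regarded as the paracomplex number (a, 0). -/
def LRe (z : ℝ × ℝ) : ℝ × ℝ := (z.1, 0)

/-- The paracomplex operator ∂/∂z̄: for ψ = (a, b), ∂ψ/∂z̄ = (1/2)(a_u − b_v, b_u − a_v). -/
noncomputable def dzbarL (ψ : ℝ × ℝ → ℝ × ℝ) (p : ℝ × ℝ) : ℝ × ℝ :=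
  ((1 / 2) * ((fderiv ℝ ψ p (1, 0)).1 - (fderiv ℝ ψ p (0, 1)).2),
   (1 / 2) * ((fderiv ℝ ψ p (1, 0)).2 - (fderiv ℝ ψ p (0, 1)).1))

open Real

@[simp]
lemma Lmul_zero_left (z : ℝ × ℝ) : Lmul 0 z = 0 := by
  ext <;> simp [Lmul]

@[simp]
lemma Lmul_zero_right (z : ℝ × ℝ) : Lmul z 0 = 0 := by
  ext <;> simp [Lmul]

@[simp]
lemma Lconj_zero : Lconj 0 = 0 := by
  ext <;> simp [Lconj]

@[simp]
lemma LRe_zero : LRe 0 = 0 := by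
  ext <;> simp [LRe]

lemma Lmul_swap_swap (z w : ℝ × ℝ) : Lmul z.swap w.swap = Lmul z w := by
  ext <;> simp only [Lmul, Prod.fst_swap, Prod.snd_swap] <;> ring

lemma Lmul_Lconj_swap (z : ℝ × ℝ) : Lmul z.swap (Lconj z.swap) = -Lmul z (Lconj z) := by
  ext <;> simp only [Lmul, Lconj, Prod.fst_swap, Prod.snd_swap, Prod.fst_neg, Prod.snd_neg] <;>
    ring

lemma LRe_Lmul_Lconj_swap_self (z : ℝ × ℝ) : LRe (Lmul (Lconj z.swap) z) = 0 := by
  ext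
  · simp only [LRe, Lmul, Lconj, Prod.fst_swap, Prod.snd_swap, Prod.fst_zero]
    ring
  · rfl

/-- `hL` is the paracomplex Cauchy–Riemann system a_u = b_v, b_u = a_v. -/
lemma dzbarL_eq_zero_of_hasFDerivAt {ψ : ℝ × ℝ → ℝ × ℝ} {L : ℝ × ℝ →L[ℝ] ℝ × ℝ} {p : ℝ × ℝ}
    (hψ : HasFDerivAt ψ L p) (hL : L (1, 0) = (L (0, 1)).swap) : dzbarL ψ p = 0 := by
  simp [dzbarL, hψ.fderiv, hL]

lemma dzbarL_const (c p : ℝ × ℝ) : dzbarL (fun _ => c) p = 0 := by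
  simp [dzbarL]

noncomputable def verticalPlaneData (p : ℝ × ℝ) : ℝ × ℝ :=
  (exp p.2 / 2 * sinh p.1, exp p.2 / 2 * cosh p.1)

lemma dzbarL_verticalPlaneData (p : ℝ × ℝ) : dzbarL verticalPlaneData p = 0 := by
  have hu : HasFDerivAt Prod.fst (ContinuousLinearMap.fst ℝ ℝ ℝ) p := hasFDerivAt_fst
  have hv : HasFDerivAt Prod.snd (ContinuousLinearMap.snd ℝ ℝ ℝ) p := hasFDerivAt_snd
  have hψ : HasFDerivAt verticalPlaneData _ p :=
    ((hv.exp.mul_const 2⁻¹).mul hu.sinh).prodMk ((hv.exp.mul_const 2⁻¹).mul hu.cosh)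
  refine dzbarL_eq_zero_of_hasFDerivAt hψ ?_
  ext <;> simp <;> ring

lemma verticalPlaneData_mul_Lconj (p : ℝ × ℝ) :
    Lmul (verticalPlaneData p) (Lconj (verticalPlaneData p)) = (-exp (2 * p.2) / 4, 0) := by
  have hexp : exp (2 * p.2) = exp p.2 ^ 2 := by rw [← exp_nat_mul]; norm_num
  ext
  · simp only [Lmul, Lconj, verticalPlaneData, hexp]
    linear_combination -(exp p.2 ^ 2 / 4) * cosh_sq_sub_sinh_sq p.1
  · simp only [Lmul, Lconj, verticalPlaneData]
    ring

/-- The Weierstrass data ψ₁ = (e^v/2)(sinh u + τ cosh u), ψ₂ = 0,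
ψ₃ = (e^v/2)(cosh u + τ sinh u) satisfies the Lorentzian Heisenberg system,
the conformality condition ψ₁² + ψ₂² − ψ₃² = 0, and
ψ₁conj(ψ₁) + ψ₂conj(ψ₂) − ψ₃conj(ψ₃) = −e^{2v}/2 < 0. -/
theorem heisenberg_vertical_plane_data
    (ψ₁ ψ₂ ψ₃ : ℝ × ℝ → ℝ × ℝ)
    (hψ₁ : ∀ p : ℝ × ℝ, ψ₁ p =
      (Real.exp p.2 / 2 * Real.sinh p.1, Real.exp p.2 / 2 * Real.cosh p.1))
    (hψ₂ : ∀ p : ℝ × ℝ, ψ₂ p = 0)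
    (hψ₃ : ∀ p : ℝ × ℝ, ψ₃ p =
      (Real.exp p.2 / 2 * Real.cosh p.1, Real.exp p.2 / 2 * Real.sinh p.1)) :
    (∀ p : ℝ × ℝ, dzbarL ψ₁ p - LRe (Lmul (Lconj (ψ₃ p)) (ψ₂ p)) = 0 ∧
      dzbarL ψ₂ p + LRe (Lmul (Lconj (ψ₃ p)) (ψ₁ p)) = 0) ∧
    (∀ p : ℝ × ℝ,
      Lmul (ψ₁ p) (ψ₁ p) + Lmul (ψ₂ p) (ψ₂ p) - Lmul (ψ₃ p) (ψ₃ p) = 0) ∧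
    (∀ p : ℝ × ℝ,
      Lmul (ψ₁ p) (Lconj (ψ₁ p)) + Lmul (ψ₂ p) (Lconj (ψ₂ p)) -
        Lmul (ψ₃ p) (Lconj (ψ₃ p)) = (-(Real.exp (2 * p.2)) / 2, 0) ∧
      -(Real.exp (2 * p.2)) / 2 < 0) := by
  have h₁ : ψ₁ = verticalPlaneData := funext hψ₁
  have h₂ : ψ₂ = fun _ => 0 := funext hψ₂
  have h₃ : ∀ p, ψ₃ p = (ψ₁ p).swap := fun p => by rw [hψ₃, hψ₁]; rfl
  refine ⟨fun p => ⟨?_, ?_⟩, fun p => ?_, fun p => ⟨?_, by linarith [exp_pos (2 * p.2)]⟩⟩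
  · rw [h₁, hψ₂, dzbarL_verticalPlaneData]
    simp
  · rw [h₂, dzbarL_const, h₃, LRe_Lmul_Lconj_swap_self, add_zero]
  · simp [hψ₂, h₃, Lmul_swap_swap]
  · rw [hψ₂, h₃, Lmul_Lconj_swap, h₁, verticalPlaneData_mul_Lconj]
    ext <;> simp
    ring
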